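/- Let M be the 8×6 real matrix with rows (0,0,2,1,0,1), (1,0,0,2,0,1), (0,1,2,0,0,1), (1,2,0,0,0,1), (0,0,2,1,1,0), (1,0,0,2,1,0), (0,1,2,0,1,0), (1,2,0,0,1,0). In every psd factorization (A₁,…,A₈, B₁,…,B₆) of M of size four, each of the fourteen factors A₁,…,A₈, B₁,…,B₆ is a 4×4 positive semidefinite matrix of rank exactly one. -/

import Mathlib

/-- A psd factorization of size `k` of a nonnegative matrix `M ∈ ℝ^{p×q}`:
real symmetric positive semidefinite `k×k` matrices `A₁,…,A_p` and `B₁,…,B_q`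
with `M i j = trace (A i * B j)` for all `i, j`. -/
def IsPsdFactorization {p q k : ℕ} (M : Matrix (Fin p) (Fin q) ℝ)
    (A : Fin p → Matrix (Fin k) (Fin k) ℝ) (B : Fin q → Matrix (Fin k) (Fin k) ℝ) : Prop :=
  (∀ i, (A i).PosSemidef) ∧ (∀ j, (B j).PosSemidef) ∧
    ∀ i j, M i j = Matrix.trace (A i * B j)

/-! For psd matrices `trace (A * B) = 0` forces `A * B = 0`, so in a psd factorization a zero entry
`M i j` means `range (B j) ≤ ker (A i)`, and a nonzero one rules this out. Every row of `M` has
three zeros, in columns on which three further rows of `M` form a triangular pattern; hence the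
ranges of the three corresponding `B j` span a 3-dimensional subspace of `ker (A i) ⊆ ℝ⁴`, and
as `A i ≠ 0` its rank is one. The same argument applied to `Mᵀ` handles the `B j`. -/

open Matrix Module
open scoped ComplexOrder

theorem Submodule.le_finrank_iSup_of_triangular {K V : Type*} [DivisionRing K] [AddCommGroup V]
    [Module K V] [FiniteDimensional K V] {m : ℕ} (W Z : Fin m → Submodule K V)
    (hlt : ∀ ⦃l k⦄, l < k → W l ≤ Z k) (hdiag : ∀ k, ¬ W k ≤ Z k) :
    m ≤ finrank K ↥(⨆ k, W k) := by
  induction m with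
  | zero => exact Nat.zero_le _
  | succ m ih =>
    set S := ⨆ k : Fin m, W k.castSucc
    have hS : m ≤ finrank K S :=
      ih _ _ (fun l k hlk => hlt (Fin.castSucc_lt_castSucc_iff.2 hlk)) fun k => hdiag _
    have hSZ : S ≤ Z (Fin.last m) := iSup_le fun l => hlt (Fin.castSucc_lt_last l)
    have hSW : S < S ⊔ W (Fin.last m) := left_lt_sup.2 fun hle => hdiag _ (hle.trans hSZ)
    have hle : S ⊔ W (Fin.last m) ≤ ⨆ k, W k :=
      sup_le (iSup_le fun l => le_iSup W _) (le_iSup W _)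
    calc m + 1 ≤ finrank K S + 1 := Nat.succ_le_succ hS
      _ ≤ finrank K ↥(S ⊔ W (Fin.last m)) := Submodule.finrank_lt_finrank_of_lt hSW
      _ ≤ finrank K ↥(⨆ k, W k) := Submodule.finrank_mono hle

namespace Matrix

variable {l m n : Type*} [Fintype m] [Fintype n]

section CommSemiring

variable {R : Type*} [CommSemiring R]

theorem mulVecLin_eq_zero_iff {A : Matrix l n R} : A.mulVecLin = 0 ↔ A = 0 := by
  classical
  rw [← toLin'_apply', LinearEquiv.map_eq_zero_iff]

theorem range_mulVecLin_le_ker_iff {A : Matrix l m R} {B : Matrix m n R} :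
    LinearMap.range B.mulVecLin ≤ LinearMap.ker A.mulVecLin ↔ A * B = 0 := by
  rw [LinearMap.range_le_ker_iff, ← mulVecLin_mul, mulVecLin_eq_zero_iff]

end CommSemiring

variable {K : Type*} [Field K]

theorem rank_eq_zero_iff {A : Matrix l n K} : A.rank = 0 ↔ A = 0 := by
  rw [rank, Submodule.finrank_eq_zero, LinearMap.range_eq_bot, mulVecLin_eq_zero_iff]

theorem rank_add_finrank_ker (A : Matrix l n K) :
    A.rank + finrank K (LinearMap.ker A.mulVecLin) = Fintype.card n := by
  rw [rank, LinearMap.finrank_range_add_finrank_ker, finrank_fintype_fun_eq_card]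

end Matrix

open scoped MatrixOrder in
theorem Matrix.PosSemidef.mul_eq_zero_of_trace_mul_eq_zero {𝕜 n : Type*} [RCLike 𝕜] [Fintype n]
    {A B : Matrix n n 𝕜} (hA : A.PosSemidef) (hB : B.PosSemidef) (h : (A * B).trace = 0) :
    A * B = 0 := by
  classical
  obtain ⟨X, rfl⟩ := CStarAlgebra.nonneg_iff_eq_star_mul_self.mp hA.nonneg
  obtain ⟨Y, rfl⟩ := CStarAlgebra.nonneg_iff_eq_star_mul_self.mp hB.nonneg
  simp only [star_eq_conjTranspose] at h ⊢
  have hXY : X * Yᴴ = 0 := by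
    rw [← trace_conjTranspose_mul_self_eq_zero_iff, ← h, conjTranspose_mul,
      conjTranspose_conjTranspose, Matrix.mul_assoc, trace_mul_comm]
    simp only [Matrix.mul_assoc]
  calc Xᴴ * X * (Yᴴ * Y) = Xᴴ * (X * Yᴴ) * Y := by simp only [Matrix.mul_assoc]
    _ = 0 := by rw [hXY, Matrix.mul_zero, Matrix.zero_mul]

namespace IsPsdFactorization

variable {p q k : ℕ} {M : Matrix (Fin p) (Fin q) ℝ} {A : Fin p → Matrix (Fin k) (Fin k) ℝ}
  {B : Fin q → Matrix (Fin k) (Fin k) ℝ}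

theorem transpose (h : IsPsdFactorization M A B) : IsPsdFactorization Mᵀ B A :=
  ⟨h.2.1, h.1, fun j i => by rw [transpose_apply, h.2.2, trace_mul_comm]⟩

theorem mul_eq_zero_iff (h : IsPsdFactorization M A B) (i : Fin p) (j : Fin q) :
    A i * B j = 0 ↔ M i j = 0 := by
  rw [h.2.2]
  exact ⟨fun hAB => by rw [hAB, trace_zero],
    PosSemidef.mul_eq_zero_of_trace_mul_eq_zero (h.1 i) (h.2.1 j)⟩

theorem range_le_ker_iff (h : IsPsdFactorization M A B) (i : Fin p) (j : Fin q) :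
    LinearMap.range (B j).mulVecLin ≤ LinearMap.ker (A i).mulVecLin ↔ M i j = 0 :=
  range_mulVecLin_le_ker_iff.trans (h.mul_eq_zero_iff i j)

end IsPsdFactorization

theorem IsPsdFactorization.rank_eq_one_of_triangular {p q k : ℕ} {M : Matrix (Fin p) (Fin q) ℝ}
    {A : Fin p → Matrix (Fin (k + 1)) (Fin (k + 1)) ℝ}
    {B : Fin q → Matrix (Fin (k + 1)) (Fin (k + 1)) ℝ} (h : IsPsdFactorization M A B) {i : Fin p}
    (e : Fin k → Fin p) (j : Fin k → Fin q) (hzero : ∀ l, M i (j l) = 0)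
    (htri : (M.submatrix e j).BlockTriangular id) (hdiag : ∀ l, M (e l) (j l) ≠ 0)
    (hi : M i ≠ 0) : (A i).rank = 1 := by
  have hker : k ≤ finrank ℝ (LinearMap.ker (A i).mulVecLin) :=
    (Submodule.le_finrank_iSup_of_triangular (fun l => LinearMap.range (B (j l)).mulVecLin)
      (fun l => LinearMap.ker (A (e l)).mulVecLin)
      (fun _ _ hlt => (h.range_le_ker_iff _ _).2 (htri hlt))
      (fun l => (h.range_le_ker_iff _ _).not.2 (hdiag l))).trans
    (Submodule.finrank_mono (iSup_le fun l => (h.range_le_ker_iff _ _).2 (hzero l)))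
  have hrank : (A i).rank ≠ 0 := fun h0 => hi <| funext fun j' => by
    rw [h.2.2, rank_eq_zero_iff.1 h0, Matrix.zero_mul, trace_zero, Pi.zero_apply]
  have := (A i).rank_add_finrank_ker
  rw [Fintype.card_fin] at this
  omega

/-- In every psd factorization `(A₁,…,A₈, B₁,…,B₆)` of the explicit
`8 × 6` matrix `M` of size four, each of the fourteen factors has rank exactly one. -/
theorem all_factors_rank_one_in_size_four_factorization :
    let M : Matrix (Fin 8) (Fin 6) ℝ :=
      !![0, 0, 2, 1, 0, 1;
         1, 0, 0, 2, 0, 1;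
         0, 1, 2, 0, 0, 1;
         1, 2, 0, 0, 0, 1;
         0, 0, 2, 1, 1, 0;
         1, 0, 0, 2, 1, 0;
         0, 1, 2, 0, 1, 0;
         1, 2, 0, 0, 1, 0]
    ∀ (A : Fin 8 → Matrix (Fin 4) (Fin 4) ℝ) (B : Fin 6 → Matrix (Fin 4) (Fin 4) ℝ),
      IsPsdFactorization M A B →
        (∀ i, (A i).rank = 1) ∧ (∀ j, (B j).rank = 1) := by
  intro M A B h
  -- For `A i`, the second table lists the columns of the three zeros in row `i` of `M`, and the
  -- first lists rows of `M` that cut out from those columns an upper triangular 3 × 3 submatrix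
  -- with nonzero diagonal; likewise for `B j` with `Mᵀ`.
  constructor
  · intro i
    apply h.rank_eq_one_of_triangular
      (![![1, 2, 4], ![2, 0, 5], ![1, 0, 6], ![0, 1, 7],
        ![1, 2, 0], ![2, 0, 1], ![1, 0, 2], ![0, 1, 3]] i)
      (![![0, 1, 4], ![1, 2, 4], ![0, 3, 4], ![2, 3, 4],
        ![0, 1, 5], ![1, 2, 5], ![0, 3, 5], ![2, 3, 5]] i)
    all_goals revert i; simp [Fin.forall_fin_succ, BlockTriangular, funext_iff, M]
  · intro j
    apply h.transpose.rank_eq_one_of_triangular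
      (![![2, 1, 4], ![2, 0, 4], ![0, 1, 4], ![1, 0, 4], ![2, 0, 1], ![2, 0, 1]] j)
      (![![0, 2, 4], ![0, 1, 4], ![1, 3, 5], ![2, 3, 6], ![0, 1, 2], ![4, 5, 6]] j)
    all_goals revert j; simp [Fin.forall_fin_succ, BlockTriangular, funext_iff, M]
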